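/- Let G be a finite simple connected graph, C a cycle of length l in G, and W⁺(G) the graph obtained by adding a new vertex x adjacent to all vertices of C. If f is a domination coloring of W⁺(G) in which x forms a singleton color class, then G admits a domination coloring using at most |f| + l - 1 colors. -/

import Mathlib

/-- A domination coloring of `G` with colors in `Fin n`: a proper coloring such that
every vertex dominates at least one (nonempty) color class, and every nonempty
color class is dominated by some vertex (contained in its closed neighborhood). -/
def IsDomColoring {V : Type*} (G : SimpleGraph V) {n : ℕ} (c : V → Fin n) : Prop :=
  (∀ u v : V, G.Adj u v → c u ≠ c v) ∧
  (∀ v : V, ∃ i : Fin n, (∃ u : V, c u = i) ∧ ∀ u : V, c u = i → u = v ∨ G.Adj v u) ∧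
  (∀ i : Fin n, (∃ u : V, c u = i) → ∃ v : V, ∀ u : V, c u = i → u = v ∨ G.Adj v u)

/-- The domination chromatic number: the least number of colors in a domination coloring. -/
noncomputable def ddChrom {V : Type*} (G : SimpleGraph V) : ℕ :=
  sInf {n : ℕ | ∃ c : V → Fin n, IsDomColoring G c}

/-- Add a new vertex (`none`) adjacent to every vertex of the set `S`. -/
def addVertex {V : Type*} (G : SimpleGraph V) (S : Set V) : SimpleGraph (Option V) where
  Adj x y :=
    match x, y with
    | some a, some b => G.Adj a b
    | some a, none => a ∈ S
    | none, some b => b ∈ S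
    | none, none => False
  symm := ⟨by
    rintro (_ | a) (_ | b) h
    · exact h
    · exact h
    · exact h
    · exact h.symm⟩
  loopless := ⟨by
    rintro (_ | a) h
    · exact h
    · exact G.irrefl h⟩

lemma addVertex_adj_ss {V : Type*} (G : SimpleGraph V) (S : Set V) (a b : V) :
    (addVertex G S).Adj (some a) (some b) ↔ G.Adj a b := Iff.rfl

lemma addVertex_adj_sn {V : Type*} (G : SimpleGraph V) (S : Set V) (a : V) :
    (addVertex G S).Adj (some a) none ↔ a ∈ S := Iff.rfl

/-- If `f` is a domination coloring of `W⁺(G)` (a new vertex joined to all vertices of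
a cycle of length `l` in a connected graph `G`) in which the new vertex forms a
singleton color class, then `G` admits a domination coloring using at most
`|f| + l - 1` colors, where `|f|` is the number of color classes of `f`. -/
theorem stmt16 {V : Type*} [Fintype V] (G : SimpleGraph V) (hG : G.Connected) (v : V)
    (w : G.Walk v v) (hw : w.IsCycle) (l : ℕ) (hl : w.length = l)
    {n : ℕ} (f : Option V → Fin n)
    (hf : IsDomColoring (addVertex G {x : V | x ∈ w.support}) f)
    (hx : ∀ y : Option V, f y = f none → y = none) :
    ∃ m ≤ (Finset.image f Finset.univ).card + l - 1,
      ∃ c : V → Fin m, IsDomColoring G c := by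
  classical
  set S : Set V := {x : V | x ∈ w.support} with hS
  let c0 : V → V ⊕ Fin n := fun u => if u ∈ w.support then Sum.inl u else Sum.inr (f (some u))
  have hc0_in : ∀ u : V, u ∈ w.support → c0 u = Sum.inl u := fun u hu => if_pos hu
  have hc0_out : ∀ u : V, u ∉ w.support → c0 u = Sum.inr (f (some u)) := fun u hu => if_neg hu
  let I : Finset (V ⊕ Fin n) := Finset.image c0 Finset.univ
  have hmemI : ∀ u : V, c0 u ∈ I := fun u => Finset.mem_image_of_mem c0 (Finset.mem_univ u)
  set k := (Finset.image f Finset.univ).card with hk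
  have hfn : f none ∈ Finset.image f Finset.univ := Finset.mem_image_of_mem f (Finset.mem_univ none)
  have hk1 : 1 ≤ k := Finset.card_pos.mpr ⟨f none, hfn⟩
  -- cardinality bound
  have hvT : v ∈ w.support.tail := by
    rw [← SimpleGraph.Walk.support_tail_of_not_nil w hw.not_nil]
    exact SimpleGraph.Walk.end_mem_support _
  have hTl : w.support.toFinset.card ≤ l := by
    have h1 : w.support.toFinset = w.support.tail.toFinset := by
      conv_lhs => rw [SimpleGraph.Walk.support_eq_cons w]
      rw [List.toFinset_cons, Finset.insert_eq_self.mpr (List.mem_toFinset.mpr hvT)]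
    rw [h1, List.toFinset_card_of_nodup hw.support_nodup]
    have h2 := SimpleGraph.Walk.length_support w
    have h3 : w.support.tail.length = w.support.length - 1 := by simp [List.length_tail]
    omega
  have hsub : I ⊆ w.support.toFinset.image Sum.inl ∪
      ((Finset.image f Finset.univ).erase (f none)).image Sum.inr := by
    intro y hy
    obtain ⟨u, -, rfl⟩ := Finset.mem_image.mp hy
    by_cases hu : u ∈ w.support
    · rw [hc0_in u hu]
      exact Finset.mem_union_left _ (Finset.mem_image_of_mem _ (List.mem_toFinset.mpr hu))
    · rw [hc0_out u hu]
      refine Finset.mem_union_right _ (Finset.mem_image_of_mem _ (Finset.mem_erase.mpr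
        ⟨fun h => ?_, Finset.mem_image_of_mem f (Finset.mem_univ _)⟩))
      exact nomatch hx _ h
  have hcard : I.card ≤ k + l - 1 := by
    have h1 := Finset.card_le_card hsub
    have h2 : (w.support.toFinset.image (Sum.inl : V → V ⊕ Fin n) ∪
        ((Finset.image f Finset.univ).erase (f none)).image Sum.inr).card ≤
        (w.support.toFinset.image (Sum.inl : V → V ⊕ Fin n)).card +
        (((Finset.image f Finset.univ).erase (f none)).image Sum.inr).card :=
      Finset.card_union_le _ _
    have h3 : (w.support.toFinset.image (Sum.inl : V → V ⊕ Fin n)).card ≤ l := by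
      calc _ ≤ w.support.toFinset.card := Finset.card_image_le
        _ ≤ l := hTl
    have h4 : (((Finset.image f Finset.univ).erase (f none)).image (Sum.inr : Fin n → V ⊕ Fin n)).card ≤ k - 1 := by
      calc _ ≤ ((Finset.image f Finset.univ).erase (f none)).card := Finset.card_image_le
        _ = k - 1 := by rw [Finset.card_erase_of_mem hfn]
    omega
  refine ⟨I.card, hcard, ?_⟩
  let e := I.equivFin
  let c : V → Fin I.card := fun u => e ⟨c0 u, hmemI u⟩
  have hcc : ∀ u u' : V, c u = c u' ↔ c0 u = c0 u' := by
    intro u u'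
    constructor
    · intro h
      exact Subtype.ext_iff.mp (e.injective h)
    · intro h
      show e _ = e _
      congr 1
      exact Subtype.ext h
  -- key: class of c0 t is dominated properly in each case
  refine ⟨c, ?_, ?_, ?_⟩
  · -- proper
    intro u u' hadj h
    rw [hcc] at h
    by_cases hu : u ∈ w.support <;> by_cases hu' : u' ∈ w.support
    · rw [hc0_in u hu, hc0_in u' hu'] at h
      exact hadj.ne (Sum.inl.inj h)
    · rw [hc0_in u hu, hc0_out u' hu'] at h
      exact nomatch h
    · rw [hc0_out u hu, hc0_in u' hu'] at h
      exact nomatch h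
    · rw [hc0_out u hu, hc0_out u' hu'] at h
      exact hf.1 (some u) (some u') ((addVertex_adj_ss G S u u').mpr hadj) (Sum.inr.inj h)
  · -- every vertex dominates a class
    intro v'
    suffices h : ∃ t : V, ∀ u : V, c0 u = c0 t → u = v' ∨ G.Adj v' u by
      obtain ⟨t, ht⟩ := h
      exact ⟨c t, ⟨t, rfl⟩, fun u hu => ht u ((hcc u t).mp hu)⟩
    by_cases hv' : v' ∈ w.support
    · refine ⟨v', fun u hu => ?_⟩
      rw [hc0_in v' hv'] at hu
      by_cases h2 : u ∈ w.support
      · rw [hc0_in u h2] at hu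
        exact Or.inl (Sum.inl.inj hu)
      · rw [hc0_out u h2] at hu
        exact nomatch hu
    · obtain ⟨i, ⟨u0, hu0⟩, hdom⟩ := hf.2.1 (some v')
      have hi : i ≠ f none := by
        intro hi
        rcases hdom none hi.symm with h | h
        · exact nomatch h
        · exact hv' ((addVertex G S).adj_symm h)
      obtain ⟨t, rfl⟩ : ∃ t, u0 = some t := by
        cases u0 with
        | none => exact absurd hu0 (fun h => hi h.symm)
        | some t => exact ⟨t, rfl⟩
      have hadj_t : t = v' ∨ G.Adj v' t := by
        rcases hdom (some t) hu0 with h | h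
        · exact Or.inl (Option.some.inj h)
        · exact Or.inr h
      by_cases hts : t ∈ w.support
      · refine ⟨t, fun u hu => ?_⟩
        rw [hc0_in t hts] at hu
        by_cases h2 : u ∈ w.support
        · rw [hc0_in u h2] at hu
          rcases Sum.inl.inj hu with rfl
          exact hadj_t
        · rw [hc0_out u h2] at hu
          exact nomatch hu
      · refine ⟨t, fun u hu => ?_⟩
        rw [hc0_out t hts] at hu
        by_cases h2 : u ∈ w.support
        · rw [hc0_in u h2] at hu
          exact nomatch hu
        · rw [hc0_out u h2] at hu
          have : f (some u) = i := by rw [Sum.inr.inj hu, hu0]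
          rcases hdom (some u) this with h | h
          · exact Or.inl (Option.some.inj h)
          · exact Or.inr h
  · -- every class is dominated
    intro i ⟨t, ht⟩
    suffices h : ∃ d : V, ∀ u : V, c0 u = c0 t → u = d ∨ G.Adj d u by
      obtain ⟨d, hd⟩ := h
      refine ⟨d, fun u hu => hd u ((hcc u t).mp ?_)⟩
      rw [hu, ht]
    by_cases hts : t ∈ w.support
    · refine ⟨t, fun u hu => ?_⟩
      rw [hc0_in t hts] at hu
      by_cases h2 : u ∈ w.support
      · rw [hc0_in u h2] at hu
        exact Or.inl (Sum.inl.inj hu)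
      · rw [hc0_out u h2] at hu
        exact nomatch hu
    · have hj : f (some t) ≠ f none := fun h => nomatch hx _ h
      obtain ⟨d0, hd0⟩ := hf.2.2 (f (some t)) ⟨some t, rfl⟩
      obtain ⟨d, rfl⟩ : ∃ d, d0 = some d := by
        cases d0 with
        | none =>
          rcases hd0 (some t) rfl with h | h
          · exact nomatch h
          · exact absurd h hts
        | some d => exact ⟨d, rfl⟩
      refine ⟨d, fun u hu => ?_⟩
      rw [hc0_out t hts] at hu
      by_cases h2 : u ∈ w.support
      · rw [hc0_in u h2] at hu
        exact nomatch hu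
      · rw [hc0_out u h2] at hu
        rcases hd0 (some u) (Sum.inr.inj hu) with h | h
        · exact Or.inl (Option.some.inj h)
        · exact Or.inr h
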